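/- arXiv:1611.00455 — 8 statements merged into one kernel-verified Lean document; each statement's English description precedes it below -/
import Mathlib

section
/- For any joint prior π on X₁ × X₂ with marginals π₁, π₂, the prior g-vulnerability satisfies V_g(π) · M^min_{g,π} ≤ V_{g₁}(π₁) · V_{g₂}(π₂); equivalently, H_g(π) ≥ H_{g₁}(π₁) + H_{g₂}(π₂) + log M^min_{g,π}. -/
open Finset

namespace QIF1

noncomputable def marg1 {X₁ X₂ : Type*} [Fintype X₂] (π : X₁ × X₂ → ℝ) (x₁ : X₁) : ℝ :=
  ∑ x₂, π (x₁, x₂)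

noncomputable def marg2 {X₁ X₂ : Type*} [Fintype X₁] (π : X₁ × X₂ → ℝ) (x₂ : X₂) : ℝ :=
  ∑ x₁, π (x₁, x₂)

/-- Prior g-vulnerability `V_g(π) = max_w ∑_x π[x] g(w,x)`. -/
noncomputable def Vg {X W : Type*} [Fintype X] [Fintype W] [Nonempty W]
    (π : X → ℝ) (g : W → X → ℝ) : ℝ :=
  Finset.univ.sup' Finset.univ_nonempty fun w => ∑ x, π x * g w x

noncomputable def gRatio {X₁ X₂ W₁ W₂ : Type*} [Fintype X₁] [Fintype X₂]
    (π : X₁ × X₂ → ℝ) (g₁ : W₁ → X₁ → ℝ) (g₂ : W₂ → X₂ → ℝ)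
    (g : W₁ × W₂ → X₁ × X₂ → ℝ) (p : (W₁ × W₂) × (X₁ × X₂)) : ℝ :=
  (marg1 π p.2.1 * g₁ p.1.1 p.2.1) * (marg2 π p.2.2 * g₂ p.1.2 p.2.2)
    / (π p.2 * g p.1 p.2)

/-- `V_g(π) · M^min_{g,π} ≤ V_{g₁}(π₁) · V_{g₂}(π₂)`, equivalently
`H_g(π) ≥ H_{g₁}(π₁) + H_{g₂}(π₂) + log M^min_{g,π}`. -/
theorem prior_g_entropy_lower {X₁ X₂ W₁ W₂ : Type*}
    [Fintype X₁] [Fintype X₂] [Fintype W₁] [Fintype W₂]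
    [Nonempty X₁] [Nonempty X₂] [Nonempty W₁] [Nonempty W₂]
    (π : X₁ × X₂ → ℝ) (g₁ : W₁ → X₁ → ℝ) (g₂ : W₂ → X₂ → ℝ)
    (g : W₁ × W₂ → X₁ × X₂ → ℝ)
    (hπ0 : ∀ p, 0 ≤ π p) (hπ1 : ∑ p, π p = 1)
    (hg₁ : ∀ w x, g₁ w x ∈ Set.Icc (0:ℝ) 1)
    (hg₂ : ∀ w x, g₂ w x ∈ Set.Icc (0:ℝ) 1)
    (hg : ∀ w p, g w p ∈ Set.Icc (0:ℝ) 1)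
    (hzero : ∀ w₁ w₂ x₁ x₂, g (w₁, w₂) (x₁, x₂) = 0 ↔ g₁ w₁ x₁ * g₂ w₂ x₂ = 0)
    (hS : (Finset.univ.filter
        (fun p : (W₁ × W₂) × (X₁ × X₂) => π p.2 * g p.1 p.2 ≠ 0)).Nonempty) :
    Vg π g * (Finset.univ.filter
        (fun p : (W₁ × W₂) × (X₁ × X₂) => π p.2 * g p.1 p.2 ≠ 0)).inf' hS
          (gRatio π g₁ g₂ g)
      ≤ Vg (marg1 π) g₁ * Vg (marg2 π) g₂ := by
  set S := (Finset.univ.filter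
      (fun p : (W₁ × W₂) × (X₁ × X₂) => π p.2 * g p.1 p.2 ≠ 0)) with hSdef
  set M := S.inf' hS (gRatio π g₁ g₂ g) with hMdef
  have hm1 : ∀ x₁, 0 ≤ marg1 π x₁ := fun x₁ =>
    Finset.sum_nonneg fun x₂ _ => hπ0 _
  have hm2 : ∀ x₂, 0 ≤ marg2 π x₂ := fun x₂ =>
    Finset.sum_nonneg fun x₁ _ => hπ0 _
  -- each gRatio over S is nonneg
  have hM0 : 0 ≤ M := by
    apply Finset.le_inf'
    intro p hp
    simp only [hSdef, Finset.mem_filter] at hp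
    have hden : 0 < π p.2 * g p.1 p.2 :=
      lt_of_le_of_ne (mul_nonneg (hπ0 _) (hg _ _).1) (Ne.symm hp.2)
    exact div_nonneg (mul_nonneg (mul_nonneg (hm1 _) (hg₁ _ _).1)
      (mul_nonneg (hm2 _) (hg₂ _ _).1)) hden.le
  obtain ⟨w, -, hw⟩ := Finset.exists_mem_eq_sup' (Finset.univ_nonempty)
    (fun w : W₁ × W₂ => ∑ x, π x * g w x)
  have hVg : Vg π g = ∑ x, π x * g w x := hw
  rw [hVg]
  have key : (∑ x, π x * g w x) * M ≤
      (∑ x₁, marg1 π x₁ * g₁ w.1 x₁) * (∑ x₂, marg2 π x₂ * g₂ w.2 x₂) := by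
    rw [Finset.sum_mul, Finset.sum_mul_sum]
    rw [show (∑ x : X₁ × X₂, π x * g w x * M)
        = ∑ x₁, ∑ x₂, π (x₁, x₂) * g w (x₁, x₂) * M from
      Fintype.sum_prod_type _]
    apply Finset.sum_le_sum
    intro x₁ _
    apply Finset.sum_le_sum
    intro x₂ _
    by_cases h : π (x₁, x₂) * g w (x₁, x₂) = 0
    · rw [h, zero_mul]
      exact mul_nonneg (mul_nonneg (hm1 _) (hg₁ _ _).1)
        (mul_nonneg (hm2 _) (hg₂ _ _).1)
    · have hp : ((w, (x₁, x₂)) : (W₁ × W₂) × (X₁ × X₂)) ∈ S := by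
        simp only [hSdef, Finset.mem_filter, Finset.mem_univ, true_and]
        exact h
      have hle : M ≤ gRatio π g₁ g₂ g (w, (x₁, x₂)) := Finset.inf'_le _ hp
      have hden : 0 < π (x₁, x₂) * g w (x₁, x₂) :=
        lt_of_le_of_ne (mul_nonneg (hπ0 _) (hg _ _).1) (Ne.symm h)
      rw [gRatio, le_div_iff₀ hden] at hle
      calc π (x₁, x₂) * g w (x₁, x₂) * M = M * (π (x₁, x₂) * g w (x₁, x₂)) := by ring
        _ ≤ _ := hle
  have hA : (∑ x₁, marg1 π x₁ * g₁ w.1 x₁) ≤ Vg (marg1 π) g₁ :=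
    Finset.le_sup' (fun w₁ => ∑ x₁, marg1 π x₁ * g₁ w₁ x₁) (Finset.mem_univ w.1)
  have hB : (∑ x₂, marg2 π x₂ * g₂ w.2 x₂) ≤ Vg (marg2 π) g₂ :=
    Finset.le_sup' (fun w₂ => ∑ x₂, marg2 π x₂ * g₂ w₂ x₂) (Finset.mem_univ w.2)
  have hBpos : (0:ℝ) ≤ ∑ x₂, marg2 π x₂ * g₂ w.2 x₂ :=
    Finset.sum_nonneg fun x₂ _ => mul_nonneg (hm2 _) (hg₂ _ _).1
  have hApos : (0:ℝ) ≤ ∑ x₁, marg1 π x₁ * g₁ w.1 x₁ :=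
    Finset.sum_nonneg fun x₁ _ => mul_nonneg (hm1 _) (hg₁ _ _).1
  exact key.trans (mul_le_mul hA hB hBpos (hApos.trans hA))

end QIF1
end

section
/- For any jointly supported prior π on X₁ × X₂, the prior g-vulnerability satisfies V_g(π) · M^max_{g,π} ≥ V_{g₁}(π₁) · V_{g₂}(π₂); equivalently, H_g(π) ≤ H_{g₁}(π₁) + H_{g₂}(π₂) + log M^max_{g,π}. -/
open Finset

namespace QIF2

noncomputable def marg1 {X₁ X₂ : Type*} [Fintype X₂] (π : X₁ × X₂ → ℝ) (x₁ : X₁) : ℝ :=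
  ∑ x₂, π (x₁, x₂)

noncomputable def marg2 {X₁ X₂ : Type*} [Fintype X₁] (π : X₁ × X₂ → ℝ) (x₂ : X₂) : ℝ :=
  ∑ x₁, π (x₁, x₂)

/-- Prior g-vulnerability `V_g(π) = max_w ∑_x π[x] g(w,x)`. -/
noncomputable def Vg {X W : Type*} [Fintype X] [Fintype W] [Nonempty W]
    (π : X → ℝ) (g : W → X → ℝ) : ℝ :=
  Finset.univ.sup' Finset.univ_nonempty fun w => ∑ x, π x * g w x

noncomputable def gRatio {X₁ X₂ W₁ W₂ : Type*} [Fintype X₁] [Fintype X₂]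
    (π : X₁ × X₂ → ℝ) (g₁ : W₁ → X₁ → ℝ) (g₂ : W₂ → X₂ → ℝ)
    (g : W₁ × W₂ → X₁ × X₂ → ℝ) (p : (W₁ × W₂) × (X₁ × X₂)) : ℝ :=
  (marg1 π p.2.1 * g₁ p.1.1 p.2.1) * (marg2 π p.2.2 * g₂ p.1.2 p.2.2)
    / (π p.2 * g p.1 p.2)

/-- For a jointly supported prior, `V_g(π) · M^max_{g,π} ≥ V_{g₁}(π₁) · V_{g₂}(π₂)`,
equivalently `H_g(π) ≤ H_{g₁}(π₁) + H_{g₂}(π₂) + log M^max_{g,π}`. -/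
theorem prior_g_entropy_upper {X₁ X₂ W₁ W₂ : Type*}
    [Fintype X₁] [Fintype X₂] [Fintype W₁] [Fintype W₂]
    [Nonempty X₁] [Nonempty X₂] [Nonempty W₁] [Nonempty W₂]
    (π : X₁ × X₂ → ℝ) (g₁ : W₁ → X₁ → ℝ) (g₂ : W₂ → X₂ → ℝ)
    (g : W₁ × W₂ → X₁ × X₂ → ℝ)
    (hπ0 : ∀ p, 0 ≤ π p) (hπ1 : ∑ p, π p = 1)
    (hg₁ : ∀ w x, g₁ w x ∈ Set.Icc (0:ℝ) 1)
    (hg₂ : ∀ w x, g₂ w x ∈ Set.Icc (0:ℝ) 1)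
    (hg : ∀ w p, g w p ∈ Set.Icc (0:ℝ) 1)
    (hzero : ∀ w₁ w₂ x₁ x₂, g (w₁, w₂) (x₁, x₂) = 0 ↔ g₁ w₁ x₁ * g₂ w₂ x₂ = 0)
    (hjs : ∀ x₁ x₂, marg1 π x₁ * marg2 π x₂ ≠ 0 → π (x₁, x₂) ≠ 0)
    (hS : (Finset.univ.filter
        (fun p : (W₁ × W₂) × (X₁ × X₂) => π p.2 * g p.1 p.2 ≠ 0)).Nonempty) :
    Vg (marg1 π) g₁ * Vg (marg2 π) g₂
      ≤ Vg π g * (Finset.univ.filter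
        (fun p : (W₁ × W₂) × (X₁ × X₂) => π p.2 * g p.1 p.2 ≠ 0)).sup' hS
          (gRatio π g₁ g₂ g) := by

  classical
  set M := (Finset.univ.filter
        (fun p : (W₁ × W₂) × (X₁ × X₂) => π p.2 * g p.1 p.2 ≠ 0)).sup'
          hS (gRatio π g₁ g₂ g) with hMdef
  obtain ⟨w₁, -, hw₁⟩ := Finset.exists_mem_eq_sup' (Finset.univ_nonempty (α := W₁))
    (fun w => ∑ x, marg1 π x * g₁ w x)
  obtain ⟨w₂, -, hw₂⟩ := Finset.exists_mem_eq_sup' (Finset.univ_nonempty (α := W₂))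
    (fun w => ∑ x, marg2 π x * g₂ w x)
  have hm1 : ∀ x₁, 0 ≤ marg1 π x₁ := fun x₁ => Finset.sum_nonneg fun _ _ => hπ0 _
  have hm2 : ∀ x₂, 0 ≤ marg2 π x₂ := fun x₂ => Finset.sum_nonneg fun _ _ => hπ0 _
  have hM0 : 0 ≤ M := by
    obtain ⟨p₀, hp₀⟩ := hS
    refine le_trans ?_ (Finset.le_sup' (gRatio π g₁ g₂ g) hp₀)
    exact div_nonneg (mul_nonneg (mul_nonneg (hm1 _) (hg₁ _ _).1)
      (mul_nonneg (hm2 _) (hg₂ _ _).1)) (mul_nonneg (hπ0 _) (hg _ _).1)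
  have hkey : ∀ x₁ x₂, (marg1 π x₁ * g₁ w₁ x₁) * (marg2 π x₂ * g₂ w₂ x₂)
      ≤ π (x₁, x₂) * g (w₁, w₂) (x₁, x₂) * M := by
    intro x₁ x₂
    by_cases h : π (x₁, x₂) * g (w₁, w₂) (x₁, x₂) = 0
    · have hL : (marg1 π x₁ * g₁ w₁ x₁) * (marg2 π x₂ * g₂ w₂ x₂) = 0 := by
        rcases mul_eq_zero.1 h with hπ' | hg'
        · have hmm : marg1 π x₁ * marg2 π x₂ = 0 := by
            by_contra hc; exact (hjs x₁ x₂ hc) hπ'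
          rcases mul_eq_zero.1 hmm with h1 | h2
          · rw [h1]; ring
          · rw [h2]; ring
        · rcases mul_eq_zero.1 ((hzero w₁ w₂ x₁ x₂).1 hg') with h1 | h2
          · rw [h1]; ring
          · rw [h2]; ring
      rw [hL, h, zero_mul]
    · have hmem : ((w₁, w₂), (x₁, x₂)) ∈ Finset.univ.filter
          (fun p : (W₁ × W₂) × (X₁ × X₂) => π p.2 * g p.1 p.2 ≠ 0) := by
        simp only [Finset.mem_filter, Finset.mem_univ, true_and]; exact h
      have hle : gRatio π g₁ g₂ g ((w₁, w₂), (x₁, x₂)) ≤ M :=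
        Finset.le_sup' (gRatio π g₁ g₂ g) hmem
      have hpos : 0 < π (x₁, x₂) * g (w₁, w₂) (x₁, x₂) :=
        lt_of_le_of_ne (mul_nonneg (hπ0 _) (hg _ _).1) (Ne.symm h)
      have := (div_le_iff₀ hpos).1 hle
      calc (marg1 π x₁ * g₁ w₁ x₁) * (marg2 π x₂ * g₂ w₂ x₂)
          ≤ M * (π (x₁, x₂) * g (w₁, w₂) (x₁, x₂)) := this
        _ = π (x₁, x₂) * g (w₁, w₂) (x₁, x₂) * M := mul_comm _ _
  calc Vg (marg1 π) g₁ * Vg (marg2 π) g₂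
      = (∑ x₁, marg1 π x₁ * g₁ w₁ x₁) * (∑ x₂, marg2 π x₂ * g₂ w₂ x₂) := by
        rw [Vg, Vg, hw₁, hw₂]
    _ = ∑ x₁, ∑ x₂, (marg1 π x₁ * g₁ w₁ x₁) * (marg2 π x₂ * g₂ w₂ x₂) := by
        rw [Finset.sum_mul_sum]
    _ ≤ ∑ x₁, ∑ x₂, π (x₁, x₂) * g (w₁, w₂) (x₁, x₂) * M := by
        refine Finset.sum_le_sum fun x₁ _ => Finset.sum_le_sum fun x₂ _ => hkey x₁ x₂
    _ = (∑ p : X₁ × X₂, π p * g (w₁, w₂) p) * M := by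
        rw [Finset.sum_mul, Fintype.sum_prod_type]
    _ ≤ Vg π g * M := by
        refine mul_le_mul_of_nonneg_right ?_ hM0
        exact Finset.le_sup' (fun w => ∑ p, π p * g w p) (Finset.mem_univ (w₁, w₂))


end QIF2
end

section
/- For any prior π on X₁ × X₂ and channels C₁ : X₁ × Y₁ → [0,1], C₂ : X₂ × Y₂ → [0,1], the posterior g-vulnerability of the parallel composition satisfies V_g(π, C₁ × C₂) · M^min_{g,π} ≤ V_{g₁}(π₁, C₁) · V_{g₂}(π₂, C₂); equivalently, H_g(π, C₁ × C₂) ≥ H_{g₁}(π₁, C₁) + H_{g₂}(π₂, C₂) + log M^min_{g,π}. -/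
/-!
Bound the joint gain pointwise: by definition of `M^min`, `π x g(w, x) · M^min` is at most
`π₁ x₁ g₁(w₁, x₁) · π₂ x₂ g₂(w₂, x₂)` on the support, and trivially off it. Multiplying by the
channel entries and summing over `x` makes the bound factor into the two marginal inner sums,
which are dominated by their maxima over `w₁` and `w₂`; summing over `y = (y₁, y₂)` factors the
right-hand side into `V_{g₁}(π₁, C₁) · V_{g₂}(π₂, C₂)`.
-/

open Finset

namespace QIF3

noncomputable def marg1 {X₁ X₂ : Type*} [Fintype X₂] (π : X₁ × X₂ → ℝ) (x₁ : X₁) : ℝ :=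
  ∑ x₂, π (x₁, x₂)

noncomputable def marg2 {X₁ X₂ : Type*} [Fintype X₁] (π : X₁ × X₂ → ℝ) (x₂ : X₂) : ℝ :=
  ∑ x₁, π (x₁, x₂)

/-- Posterior g-vulnerability `V_g(π,C) = ∑_y max_w ∑_x π[x] C[x,y] g(w,x)`. -/
noncomputable def VgPost {X Y W : Type*} [Fintype X] [Fintype Y] [Fintype W] [Nonempty W]
    (π : X → ℝ) (C : X → Y → ℝ) (g : W → X → ℝ) : ℝ :=
  ∑ y, Finset.univ.sup' Finset.univ_nonempty fun w => ∑ x, π x * C x y * g w x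

/-- Parallel composition with distinct inputs. -/
noncomputable def parC {X₁ X₂ Y₁ Y₂ : Type*}
    (C₁ : X₁ → Y₁ → ℝ) (C₂ : X₂ → Y₂ → ℝ) : X₁ × X₂ → Y₁ × Y₂ → ℝ :=
  fun p q => C₁ p.1 q.1 * C₂ p.2 q.2

noncomputable def gRatio {X₁ X₂ W₁ W₂ : Type*} [Fintype X₁] [Fintype X₂]
    (π : X₁ × X₂ → ℝ) (g₁ : W₁ → X₁ → ℝ) (g₂ : W₂ → X₂ → ℝ)
    (g : W₁ × W₂ → X₁ × X₂ → ℝ) (p : (W₁ × W₂) × (X₁ × X₂)) : ℝ :=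
  (marg1 π p.2.1 * g₁ p.1.1 p.2.1) * (marg2 π p.2.2 * g₂ p.1.2 p.2.2)
    / (π p.2 * g p.1 p.2)

lemma mul_inf'_div_le {α : Type*} [Fintype α] (N D : α → ℝ)
    [DecidablePred fun p => D p ≠ 0] (hN : ∀ p, 0 ≤ N p) (hD : ∀ p, 0 ≤ D p)
    (hS : (univ.filter fun p => D p ≠ 0).Nonempty) (p : α) :
    D p * (univ.filter fun p => D p ≠ 0).inf' hS (fun p => N p / D p) ≤ N p := by
  rcases (hD p).eq_or_lt with hp | hp
  · rw [← hp, zero_mul]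
    exact hN p
  · have hmem : p ∈ univ.filter fun p => D p ≠ 0 := mem_filter.mpr ⟨mem_univ p, hp.ne'⟩
    rw [mul_comm, ← le_div_iff₀ hp]
    exact inf'_le _ hmem

lemma sup'_mul_le_sup'_mul_sup' {W₁ W₂ : Type*} [Fintype W₁] [Fintype W₂]
    [Nonempty W₁] [Nonempty W₂] (f : W₁ × W₂ → ℝ) (a : W₁ → ℝ) (b : W₂ → ℝ) (M : ℝ)
    (ha : ∀ w, 0 ≤ a w) (hb : ∀ w, 0 ≤ b w) (h : ∀ w, f w * M ≤ a w.1 * b w.2) :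
    univ.sup' univ_nonempty f * M ≤ univ.sup' univ_nonempty a * univ.sup' univ_nonempty b := by
  obtain ⟨w, -, hw⟩ := exists_mem_eq_sup' univ_nonempty f
  have ha_le : a w.1 ≤ univ.sup' univ_nonempty a := le_sup' a (mem_univ _)
  rw [hw]
  exact (h w).trans <| mul_le_mul ha_le (le_sup' b (mem_univ _)) (hb _) ((ha _).trans ha_le)

section Parallel

variable {X₁ X₂ Y₁ Y₂ W₁ W₂ : Type*} [Fintype X₁] [Fintype X₂]
  {π : X₁ × X₂ → ℝ} {π₁ : X₁ → ℝ} {π₂ : X₂ → ℝ} {C₁ : X₁ → Y₁ → ℝ} {C₂ : X₂ → Y₂ → ℝ}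
  {g₁ : W₁ → X₁ → ℝ} {g₂ : W₂ → X₂ → ℝ} {g : W₁ × W₂ → X₁ × X₂ → ℝ} {M : ℝ}

lemma sum_parC_mul_le (hC₁ : ∀ x y, 0 ≤ C₁ x y) (hC₂ : ∀ x y, 0 ≤ C₂ x y)
    (hg : ∀ w x, π x * g w x * M ≤ (π₁ x.1 * g₁ w.1 x.1) * (π₂ x.2 * g₂ w.2 x.2))
    (w : W₁ × W₂) (y : Y₁ × Y₂) :
    (∑ x, π x * parC C₁ C₂ x y * g w x) * M ≤
      (∑ x₁, π₁ x₁ * C₁ x₁ y.1 * g₁ w.1 x₁) * ∑ x₂, π₂ x₂ * C₂ x₂ y.2 * g₂ w.2 x₂ :=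
  calc (∑ x, π x * parC C₁ C₂ x y * g w x) * M
      = ∑ x, π x * g w x * M * (C₁ x.1 y.1 * C₂ x.2 y.2) := by
        rw [sum_mul]
        exact sum_congr rfl fun x _ => by simp only [parC]; ring
    _ ≤ ∑ x, (π₁ x.1 * g₁ w.1 x.1) * (π₂ x.2 * g₂ w.2 x.2) * (C₁ x.1 y.1 * C₂ x.2 y.2) :=
        sum_le_sum fun x _ => mul_le_mul_of_nonneg_right (hg w x) (mul_nonneg (hC₁ _ _) (hC₂ _ _))
    _ = _ := by
        rw [sum_mul_sum, Fintype.sum_prod_type]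
        exact sum_congr rfl fun _ _ => sum_congr rfl fun _ _ => by ring

lemma VgPost_parC_mul_le [Fintype Y₁] [Fintype Y₂] [Fintype W₁] [Fintype W₂]
    [Nonempty W₁] [Nonempty W₂] (hπ₁ : ∀ x, 0 ≤ π₁ x) (hπ₂ : ∀ x, 0 ≤ π₂ x)
    (hC₁ : ∀ x y, 0 ≤ C₁ x y) (hC₂ : ∀ x y, 0 ≤ C₂ x y)
    (hg₁ : ∀ w x, 0 ≤ g₁ w x) (hg₂ : ∀ w x, 0 ≤ g₂ w x)
    (hg : ∀ w x, π x * g w x * M ≤ (π₁ x.1 * g₁ w.1 x.1) * (π₂ x.2 * g₂ w.2 x.2)) :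
    VgPost π (parC C₁ C₂) g * M ≤ VgPost π₁ C₁ g₁ * VgPost π₂ C₂ g₂ := by
  rw [VgPost, VgPost, VgPost, sum_mul, sum_mul_sum, ← Fintype.sum_prod_type']
  refine sum_le_sum fun y _ => sup'_mul_le_sup'_mul_sup' _ _ _ _ (fun w => ?_) (fun w => ?_)
    fun w => sum_parC_mul_le hC₁ hC₂ hg w y
  · exact sum_nonneg fun x _ => mul_nonneg (mul_nonneg (hπ₁ x) (hC₁ _ _)) (hg₁ w x)
  · exact sum_nonneg fun x _ => mul_nonneg (mul_nonneg (hπ₂ x) (hC₂ _ _)) (hg₂ w x)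

end Parallel

theorem posterior_g_entropy_lower_general {X₁ X₂ Y₁ Y₂ W₁ W₂ : Type*}
    [Fintype X₁] [Fintype X₂] [Fintype Y₁] [Fintype Y₂] [Fintype W₁] [Fintype W₂]
    [Nonempty W₁] [Nonempty W₂]
    (π : X₁ × X₂ → ℝ) (C₁ : X₁ → Y₁ → ℝ) (C₂ : X₂ → Y₂ → ℝ)
    (g₁ : W₁ → X₁ → ℝ) (g₂ : W₂ → X₂ → ℝ) (g : W₁ × W₂ → X₁ × X₂ → ℝ)
    (hπ0 : ∀ p, 0 ≤ π p)
    (hC₁0 : ∀ x y, 0 ≤ C₁ x y)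
    (hC₂0 : ∀ x y, 0 ≤ C₂ x y)
    (hg₁ : ∀ w x, g₁ w x ∈ Set.Icc (0:ℝ) 1)
    (hg₂ : ∀ w x, g₂ w x ∈ Set.Icc (0:ℝ) 1)
    (hg : ∀ w p, g w p ∈ Set.Icc (0:ℝ) 1)
    (hS : (Finset.univ.filter
        (fun p : (W₁ × W₂) × (X₁ × X₂) => π p.2 * g p.1 p.2 ≠ 0)).Nonempty) :
    VgPost π (parC C₁ C₂) g * (Finset.univ.filter
        (fun p : (W₁ × W₂) × (X₁ × X₂) => π p.2 * g p.1 p.2 ≠ 0)).inf' hS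
          (gRatio π g₁ g₂ g)
      ≤ VgPost (marg1 π) C₁ g₁ * VgPost (marg2 π) C₂ g₂ := by
  have hmarg1 : ∀ x, 0 ≤ marg1 π x := fun _ => sum_nonneg fun _ _ => hπ0 _
  have hmarg2 : ∀ x, 0 ≤ marg2 π x := fun _ => sum_nonneg fun _ _ => hπ0 _
  refine VgPost_parC_mul_le hmarg1 hmarg2 hC₁0 hC₂0 (fun w x => (hg₁ w x).1)
    (fun w x => (hg₂ w x).1) fun w x => ?_
  exact mul_inf'_div_le
    (fun p => (marg1 π p.2.1 * g₁ p.1.1 p.2.1) * (marg2 π p.2.2 * g₂ p.1.2 p.2.2))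
    (fun p => π p.2 * g p.1 p.2)
    (fun p => mul_nonneg (mul_nonneg (hmarg1 _) (hg₁ _ _).1) (mul_nonneg (hmarg2 _) (hg₂ _ _).1))
    (fun p => mul_nonneg (hπ0 _) (hg _ _).1) hS (w, x)

/-- `V_g(π, C₁ × C₂) · M^min_{g,π} ≤ V_{g₁}(π₁, C₁) · V_{g₂}(π₂, C₂)`, equivalently
`H_g(π, C₁ × C₂) ≥ H_{g₁}(π₁, C₁) + H_{g₂}(π₂, C₂) + log M^min_{g,π}`. -/
theorem posterior_g_entropy_lower {X₁ X₂ Y₁ Y₂ W₁ W₂ : Type*}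
    [Fintype X₁] [Fintype X₂] [Fintype Y₁] [Fintype Y₂] [Fintype W₁] [Fintype W₂]
    [Nonempty X₁] [Nonempty X₂] [Nonempty W₁] [Nonempty W₂]
    (π : X₁ × X₂ → ℝ) (C₁ : X₁ → Y₁ → ℝ) (C₂ : X₂ → Y₂ → ℝ)
    (g₁ : W₁ → X₁ → ℝ) (g₂ : W₂ → X₂ → ℝ) (g : W₁ × W₂ → X₁ × X₂ → ℝ)
    (hπ0 : ∀ p, 0 ≤ π p) (hπ1 : ∑ p, π p = 1)
    (hC₁0 : ∀ x y, 0 ≤ C₁ x y) (hC₁1 : ∀ x, ∑ y, C₁ x y = 1)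
    (hC₂0 : ∀ x y, 0 ≤ C₂ x y) (hC₂1 : ∀ x, ∑ y, C₂ x y = 1)
    (hg₁ : ∀ w x, g₁ w x ∈ Set.Icc (0:ℝ) 1)
    (hg₂ : ∀ w x, g₂ w x ∈ Set.Icc (0:ℝ) 1)
    (hg : ∀ w p, g w p ∈ Set.Icc (0:ℝ) 1)
    (hzero : ∀ w₁ w₂ x₁ x₂, g (w₁, w₂) (x₁, x₂) = 0 ↔ g₁ w₁ x₁ * g₂ w₂ x₂ = 0)
    (hS : (Finset.univ.filter
        (fun p : (W₁ × W₂) × (X₁ × X₂) => π p.2 * g p.1 p.2 ≠ 0)).Nonempty) :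
    VgPost π (parC C₁ C₂) g * (Finset.univ.filter
        (fun p : (W₁ × W₂) × (X₁ × X₂) => π p.2 * g p.1 p.2 ≠ 0)).inf' hS
          (gRatio π g₁ g₂ g)
      ≤ VgPost (marg1 π) C₁ g₁ * VgPost (marg2 π) C₂ g₂ :=
  posterior_g_entropy_lower_general π C₁ C₂ g₁ g₂ g hπ0 hC₁0 hC₂0 hg₁ hg₂ hg hS

end QIF3
end

section
/- For any jointly supported prior π on X₁ × X₂ and channels C₁, C₂, the posterior g-vulnerability of the parallel composition satisfies V_g(π, C₁ × C₂) · M^max_{g,π} ≥ V_{g₁}(π₁, C₁) · V_{g₂}(π₂, C₂); equivalently, H_g(π, C₁ × C₂) ≤ H_{g₁}(π₁, C₁) + H_{g₂}(π₂, C₂) + log M^max_{g,π}. -/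
open Finset

namespace QIF4

noncomputable def marg1 {X₁ X₂ : Type*} [Fintype X₂] (π : X₁ × X₂ → ℝ) (x₁ : X₁) : ℝ :=
  ∑ x₂, π (x₁, x₂)

noncomputable def marg2 {X₁ X₂ : Type*} [Fintype X₁] (π : X₁ × X₂ → ℝ) (x₂ : X₂) : ℝ :=
  ∑ x₁, π (x₁, x₂)

/-- Posterior g-vulnerability `V_g(π,C) = ∑_y max_w ∑_x π[x] C[x,y] g(w,x)`. -/
noncomputable def VgPost {X Y W : Type*} [Fintype X] [Fintype Y] [Fintype W] [Nonempty W]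
    (π : X → ℝ) (C : X → Y → ℝ) (g : W → X → ℝ) : ℝ :=
  ∑ y, Finset.univ.sup' Finset.univ_nonempty fun w => ∑ x, π x * C x y * g w x

/-- Parallel composition with distinct inputs. -/
noncomputable def parC {X₁ X₂ Y₁ Y₂ : Type*}
    (C₁ : X₁ → Y₁ → ℝ) (C₂ : X₂ → Y₂ → ℝ) : X₁ × X₂ → Y₁ × Y₂ → ℝ :=
  fun p q => C₁ p.1 q.1 * C₂ p.2 q.2

noncomputable def gRatio {X₁ X₂ W₁ W₂ : Type*} [Fintype X₁] [Fintype X₂]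
    (π : X₁ × X₂ → ℝ) (g₁ : W₁ → X₁ → ℝ) (g₂ : W₂ → X₂ → ℝ)
    (g : W₁ × W₂ → X₁ × X₂ → ℝ) (p : (W₁ × W₂) × (X₁ × X₂)) : ℝ :=
  (marg1 π p.2.1 * g₁ p.1.1 p.2.1) * (marg2 π p.2.2 * g₂ p.1.2 p.2.2)
    / (π p.2 * g p.1 p.2)

/-- For a jointly supported prior,
`V_g(π, C₁ × C₂) · M^max_{g,π} ≥ V_{g₁}(π₁, C₁) · V_{g₂}(π₂, C₂)`, equivalently
`H_g(π, C₁ × C₂) ≤ H_{g₁}(π₁, C₁) + H_{g₂}(π₂, C₂) + log M^max_{g,π}`. -/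
theorem posterior_g_entropy_upper {X₁ X₂ Y₁ Y₂ W₁ W₂ : Type*}
    [Fintype X₁] [Fintype X₂] [Fintype Y₁] [Fintype Y₂] [Fintype W₁] [Fintype W₂]
    [Nonempty X₁] [Nonempty X₂] [Nonempty W₁] [Nonempty W₂]
    (π : X₁ × X₂ → ℝ) (C₁ : X₁ → Y₁ → ℝ) (C₂ : X₂ → Y₂ → ℝ)
    (g₁ : W₁ → X₁ → ℝ) (g₂ : W₂ → X₂ → ℝ) (g : W₁ × W₂ → X₁ × X₂ → ℝ)
    (hπ0 : ∀ p, 0 ≤ π p) (hπ1 : ∑ p, π p = 1)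
    (hC₁0 : ∀ x y, 0 ≤ C₁ x y) (hC₁1 : ∀ x, ∑ y, C₁ x y = 1)
    (hC₂0 : ∀ x y, 0 ≤ C₂ x y) (hC₂1 : ∀ x, ∑ y, C₂ x y = 1)
    (hg₁ : ∀ w x, g₁ w x ∈ Set.Icc (0:ℝ) 1)
    (hg₂ : ∀ w x, g₂ w x ∈ Set.Icc (0:ℝ) 1)
    (hg : ∀ w p, g w p ∈ Set.Icc (0:ℝ) 1)
    (hzero : ∀ w₁ w₂ x₁ x₂, g (w₁, w₂) (x₁, x₂) = 0 ↔ g₁ w₁ x₁ * g₂ w₂ x₂ = 0)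
    (hjs : ∀ x₁ x₂, marg1 π x₁ * marg2 π x₂ ≠ 0 → π (x₁, x₂) ≠ 0)
    (hS : (Finset.univ.filter
        (fun p : (W₁ × W₂) × (X₁ × X₂) => π p.2 * g p.1 p.2 ≠ 0)).Nonempty) :
    VgPost (marg1 π) C₁ g₁ * VgPost (marg2 π) C₂ g₂
      ≤ VgPost π (parC C₁ C₂) g * (Finset.univ.filter
        (fun p : (W₁ × W₂) × (X₁ × X₂) => π p.2 * g p.1 p.2 ≠ 0)).sup' hS
          (gRatio π g₁ g₂ g) := by
  classical
  set M := (Finset.univ.filter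
      (fun p : (W₁ × W₂) × (X₁ × X₂) => π p.2 * g p.1 p.2 ≠ 0)).sup' hS
        (gRatio π g₁ g₂ g) with hMdef
  have hm1 : ∀ x₁, 0 ≤ marg1 π x₁ := fun x₁ => Finset.sum_nonneg fun _ _ => hπ0 _
  have hm2 : ∀ x₂, 0 ≤ marg2 π x₂ := fun x₂ => Finset.sum_nonneg fun _ _ => hπ0 _
  have key : ∀ w₁ w₂ x₁ x₂,
      (marg1 π x₁ * g₁ w₁ x₁) * (marg2 π x₂ * g₂ w₂ x₂)
        ≤ M * (π (x₁, x₂) * g (w₁, w₂) (x₁, x₂)) := by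
    intro w₁ w₂ x₁ x₂
    by_cases h : π (x₁, x₂) * g (w₁, w₂) (x₁, x₂) = 0
    · rcases mul_eq_zero.mp h with h0 | h0
      · have hmm : marg1 π x₁ * marg2 π x₂ = 0 := by
          by_contra hc; exact hjs x₁ x₂ hc h0
        calc (marg1 π x₁ * g₁ w₁ x₁) * (marg2 π x₂ * g₂ w₂ x₂)
            = (marg1 π x₁ * marg2 π x₂) * (g₁ w₁ x₁ * g₂ w₂ x₂) := by ring
          _ = 0 := by rw [hmm, zero_mul]
          _ ≤ M * (π (x₁, x₂) * g (w₁, w₂) (x₁, x₂)) := by rw [h, mul_zero]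
      · have hgg : g₁ w₁ x₁ * g₂ w₂ x₂ = 0 := (hzero w₁ w₂ x₁ x₂).mp h0
        calc (marg1 π x₁ * g₁ w₁ x₁) * (marg2 π x₂ * g₂ w₂ x₂)
            = (marg1 π x₁ * marg2 π x₂) * (g₁ w₁ x₁ * g₂ w₂ x₂) := by ring
          _ = 0 := by rw [hgg, mul_zero]
          _ ≤ M * (π (x₁, x₂) * g (w₁, w₂) (x₁, x₂)) := by rw [h, mul_zero]
    · have hp : ((w₁, w₂), (x₁, x₂)) ∈ (Finset.univ.filter
          (fun p : (W₁ × W₂) × (X₁ × X₂) => π p.2 * g p.1 p.2 ≠ 0)) := by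
        simp only [Finset.mem_filter, Finset.mem_univ, true_and]; exact h
      have hle : (marg1 π x₁ * g₁ w₁ x₁) * (marg2 π x₂ * g₂ w₂ x₂)
          / (π (x₁, x₂) * g (w₁, w₂) (x₁, x₂)) ≤ M :=
        Finset.le_sup' (gRatio π g₁ g₂ g) hp
      have hpos : 0 < π (x₁, x₂) * g (w₁, w₂) (x₁, x₂) :=
        lt_of_le_of_ne (mul_nonneg (hπ0 _) (hg _ _).1) (Ne.symm h)
      exact (div_le_iff₀ hpos).mp hle
  obtain ⟨p₀, hp₀⟩ := hS
  have hp₀' : π p₀.2 * g p₀.1 p₀.2 ≠ 0 := (Finset.mem_filter.mp hp₀).2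
  have hM0 : 0 ≤ M := by
    refine le_trans ?_ (Finset.le_sup' (gRatio π g₁ g₂ g) hp₀)
    exact div_nonneg (mul_nonneg (mul_nonneg (hm1 _) (hg₁ _ _).1)
      (mul_nonneg (hm2 _) (hg₂ _ _).1)) (mul_nonneg (hπ0 _) (hg _ _).1)
  have main : ∀ (y₁ : Y₁) (y₂ : Y₂),
      (Finset.univ.sup' Finset.univ_nonempty fun w₁ =>
          ∑ x₁, marg1 π x₁ * C₁ x₁ y₁ * g₁ w₁ x₁)
      * (Finset.univ.sup' Finset.univ_nonempty fun w₂ =>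
          ∑ x₂, marg2 π x₂ * C₂ x₂ y₂ * g₂ w₂ x₂)
      ≤ M * (Finset.univ.sup' Finset.univ_nonempty fun w : W₁ × W₂ =>
          ∑ x : X₁ × X₂, π x * parC C₁ C₂ x (y₁, y₂) * g w x) := by
    intro y₁ y₂
    obtain ⟨w₁, -, hw₁⟩ := Finset.exists_mem_eq_sup' (Finset.univ_nonempty (α := W₁))
      (fun w₁ => ∑ x₁, marg1 π x₁ * C₁ x₁ y₁ * g₁ w₁ x₁)
    obtain ⟨w₂, -, hw₂⟩ := Finset.exists_mem_eq_sup' (Finset.univ_nonempty (α := W₂))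
      (fun w₂ => ∑ x₂, marg2 π x₂ * C₂ x₂ y₂ * g₂ w₂ x₂)
    rw [hw₁, hw₂]
    calc (∑ x₁, marg1 π x₁ * C₁ x₁ y₁ * g₁ w₁ x₁)
          * (∑ x₂, marg2 π x₂ * C₂ x₂ y₂ * g₂ w₂ x₂)
        = ∑ x₁, ∑ x₂, (marg1 π x₁ * C₁ x₁ y₁ * g₁ w₁ x₁)
            * (marg2 π x₂ * C₂ x₂ y₂ * g₂ w₂ x₂) := by
          rw [Finset.sum_mul_sum]
      _ ≤ ∑ x₁, ∑ x₂, M * (π (x₁, x₂) * parC C₁ C₂ (x₁, x₂) (y₁, y₂)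
            * g (w₁, w₂) (x₁, x₂)) := by
          refine Finset.sum_le_sum fun x₁ _ => Finset.sum_le_sum fun x₂ _ => ?_
          have hC : 0 ≤ C₁ x₁ y₁ * C₂ x₂ y₂ := mul_nonneg (hC₁0 _ _) (hC₂0 _ _)
          calc (marg1 π x₁ * C₁ x₁ y₁ * g₁ w₁ x₁) * (marg2 π x₂ * C₂ x₂ y₂ * g₂ w₂ x₂)
              = (C₁ x₁ y₁ * C₂ x₂ y₂)
                  * ((marg1 π x₁ * g₁ w₁ x₁) * (marg2 π x₂ * g₂ w₂ x₂)) := by ring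
            _ ≤ (C₁ x₁ y₁ * C₂ x₂ y₂)
                  * (M * (π (x₁, x₂) * g (w₁, w₂) (x₁, x₂))) :=
                mul_le_mul_of_nonneg_left (key w₁ w₂ x₁ x₂) hC
            _ = M * (π (x₁, x₂) * parC C₁ C₂ (x₁, x₂) (y₁, y₂)
                  * g (w₁, w₂) (x₁, x₂)) := by simp only [parC]; ring
      _ = M * ∑ x : X₁ × X₂, π x * parC C₁ C₂ x (y₁, y₂) * g (w₁, w₂) x := by
          rw [Fintype.sum_prod_type, Finset.mul_sum]
          exact Finset.sum_congr rfl fun x₁ _ => by rw [Finset.mul_sum]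
      _ ≤ M * (Finset.univ.sup' Finset.univ_nonempty fun w : W₁ × W₂ =>
            ∑ x : X₁ × X₂, π x * parC C₁ C₂ x (y₁, y₂) * g w x) :=
          mul_le_mul_of_nonneg_left
            (Finset.le_sup' (f := fun w : W₁ × W₂ =>
              ∑ x : X₁ × X₂, π x * parC C₁ C₂ x (y₁, y₂) * g w x)
              (Finset.mem_univ (w₁, w₂))) hM0
  calc VgPost (marg1 π) C₁ g₁ * VgPost (marg2 π) C₂ g₂
      = ∑ y₁, ∑ y₂, (Finset.univ.sup' Finset.univ_nonempty fun w₁ =>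
          ∑ x₁, marg1 π x₁ * C₁ x₁ y₁ * g₁ w₁ x₁)
        * (Finset.univ.sup' Finset.univ_nonempty fun w₂ =>
          ∑ x₂, marg2 π x₂ * C₂ x₂ y₂ * g₂ w₂ x₂) := by
        rw [VgPost, VgPost, Finset.sum_mul_sum]
    _ ≤ ∑ y₁, ∑ y₂, M * (Finset.univ.sup' Finset.univ_nonempty fun w : W₁ × W₂ =>
          ∑ x : X₁ × X₂, π x * parC C₁ C₂ x (y₁, y₂) * g w x) :=
        Finset.sum_le_sum fun y₁ _ => Finset.sum_le_sum fun y₂ _ => main y₁ y₂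
    _ = VgPost π (parC C₁ C₂) g * M := by
        rw [VgPost, Fintype.sum_prod_type, Finset.sum_mul]
        exact Finset.sum_congr rfl fun y₁ _ => by
          rw [Finset.sum_mul]
          exact Finset.sum_congr rfl fun y₂ _ => mul_comm _ _

end QIF4
end

section
/- If g₁ and g₂ are independent, i.e., g((w₁,w₂),(x₁,x₂)) = g₁(w₁,x₁)·g₂(w₂,x₂) for all arguments, then for any priors π₁ on X₁ and π₂ on X₂, V_g(π₁ × π₂, C₁ × C₂) = V_{g₁}(π₁, C₁) · V_{g₂}(π₂, C₂) (equivalently, the posterior g-entropy of the parallel composition is the sum of the component posterior g-entropies). -/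
open Finset

namespace QIF5

/-- Posterior g-vulnerability `V_g(π,C) = ∑_y max_w ∑_x π[x] C[x,y] g(w,x)`. -/
noncomputable def VgPost {X Y W : Type*} [Fintype X] [Fintype Y] [Fintype W] [Nonempty W]
    (π : X → ℝ) (C : X → Y → ℝ) (g : W → X → ℝ) : ℝ :=
  ∑ y, Finset.univ.sup' Finset.univ_nonempty fun w => ∑ x, π x * C x y * g w x

/-- Parallel composition with distinct inputs. -/
noncomputable def parC {X₁ X₂ Y₁ Y₂ : Type*}
    (C₁ : X₁ → Y₁ → ℝ) (C₂ : X₂ → Y₂ → ℝ) : X₁ × X₂ → Y₁ × Y₂ → ℝ :=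
  fun p q => C₁ p.1 q.1 * C₂ p.2 q.2

/-- Product prior `(π₁ × π₂)[x₁,x₂] = π₁[x₁]·π₂[x₂]`. -/
noncomputable def prodPrior {X₁ X₂ : Type*} (π₁ : X₁ → ℝ) (π₂ : X₂ → ℝ) :
    X₁ × X₂ → ℝ := fun p => π₁ p.1 * π₂ p.2

lemma sup'_prod_mul {W₁ W₂ : Type*} [Fintype W₁] [Fintype W₂] [Nonempty W₁] [Nonempty W₂]
    (f : W₁ → ℝ) (h : W₂ → ℝ) (hf : ∀ w, 0 ≤ f w) (hh : ∀ w, 0 ≤ h w) :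
    (Finset.univ : Finset (W₁ × W₂)).sup' Finset.univ_nonempty (fun p => f p.1 * h p.2)
      = Finset.univ.sup' Finset.univ_nonempty f * Finset.univ.sup' Finset.univ_nonempty h := by
  apply le_antisymm
  · apply Finset.sup'_le
    intro p _
    exact mul_le_mul (Finset.le_sup' f (Finset.mem_univ p.1))
      (Finset.le_sup' h (Finset.mem_univ p.2)) (hh p.2)
      (le_trans (hf p.1) (Finset.le_sup' f (Finset.mem_univ p.1)))
  · obtain ⟨w₁, _, h1⟩ := Finset.exists_mem_eq_sup' (Finset.univ_nonempty) f
    obtain ⟨w₂, _, h2⟩ := Finset.exists_mem_eq_sup' (Finset.univ_nonempty) h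
    rw [h1, h2]
    exact Finset.le_sup' (fun p => f p.1 * h p.2) (Finset.mem_univ (w₁, w₂))

/-- If the gain functions are independent, the posterior g-vulnerability of the
parallel composition with product prior factorizes:
`V_g(π₁ × π₂, C₁ × C₂) = V_{g₁}(π₁, C₁) · V_{g₂}(π₂, C₂)`. -/
theorem posterior_g_vul_independent {X₁ X₂ Y₁ Y₂ W₁ W₂ : Type*}
    [Fintype X₁] [Fintype X₂] [Fintype Y₁] [Fintype Y₂] [Fintype W₁] [Fintype W₂]
    [Nonempty X₁] [Nonempty X₂] [Nonempty W₁] [Nonempty W₂]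
    (π₁ : X₁ → ℝ) (π₂ : X₂ → ℝ) (C₁ : X₁ → Y₁ → ℝ) (C₂ : X₂ → Y₂ → ℝ)
    (g₁ : W₁ → X₁ → ℝ) (g₂ : W₂ → X₂ → ℝ) (g : W₁ × W₂ → X₁ × X₂ → ℝ)
    (hπ₁0 : ∀ x, 0 ≤ π₁ x) (hπ₁1 : ∑ x, π₁ x = 1)
    (hπ₂0 : ∀ x, 0 ≤ π₂ x) (hπ₂1 : ∑ x, π₂ x = 1)
    (hC₁0 : ∀ x y, 0 ≤ C₁ x y) (hC₁1 : ∀ x, ∑ y, C₁ x y = 1)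
    (hC₂0 : ∀ x y, 0 ≤ C₂ x y) (hC₂1 : ∀ x, ∑ y, C₂ x y = 1)
    (hg₁ : ∀ w x, g₁ w x ∈ Set.Icc (0:ℝ) 1)
    (hg₂ : ∀ w x, g₂ w x ∈ Set.Icc (0:ℝ) 1)
    (hindep : ∀ w₁ w₂ x₁ x₂, g (w₁, w₂) (x₁, x₂) = g₁ w₁ x₁ * g₂ w₂ x₂) :
    VgPost (prodPrior π₁ π₂) (parC C₁ C₂) g
      = VgPost π₁ C₁ g₁ * VgPost π₂ C₂ g₂ := by
  classical
  have hS₁0 : ∀ w y, (0:ℝ) ≤ ∑ x, π₁ x * C₁ x y * g₁ w x := fun w y =>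
    Finset.sum_nonneg fun x _ => mul_nonneg (mul_nonneg (hπ₁0 x) (hC₁0 x y)) (hg₁ w x).1
  have hS₂0 : ∀ w y, (0:ℝ) ≤ ∑ x, π₂ x * C₂ x y * g₂ w x := fun w y =>
    Finset.sum_nonneg fun x _ => mul_nonneg (mul_nonneg (hπ₂0 x) (hC₂0 x y)) (hg₂ w x).1
  have key : ∀ (y : Y₁ × Y₂) (w : W₁ × W₂),
      (∑ x, prodPrior π₁ π₂ x * parC C₁ C₂ x y * g w x)
        = (∑ x, π₁ x * C₁ x y.1 * g₁ w.1 x) * (∑ x, π₂ x * C₂ x y.2 * g₂ w.2 x) := by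
    intro y w
    rw [Finset.sum_mul_sum, Fintype.sum_prod_type]
    refine Finset.sum_congr rfl fun x₁ _ => Finset.sum_congr rfl fun x₂ _ => ?_
    simp only [prodPrior, parC]
    rw [hindep w.1 w.2 x₁ x₂]
    ring
  unfold VgPost
  rw [Fintype.sum_prod_type, Finset.sum_mul_sum]
  refine Finset.sum_congr rfl fun y₁ _ => Finset.sum_congr rfl fun y₂ _ => ?_
  calc (Finset.univ.sup' Finset.univ_nonempty fun w =>
        ∑ x, prodPrior π₁ π₂ x * parC C₁ C₂ x (y₁, y₂) * g w x)
      = Finset.univ.sup' Finset.univ_nonempty (fun w : W₁ × W₂ =>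
          (∑ x, π₁ x * C₁ x y₁ * g₁ w.1 x) * (∑ x, π₂ x * C₂ x y₂ * g₂ w.2 x)) := by
        exact Finset.sup'_congr _ rfl fun w _ => key (y₁, y₂) w
    _ = _ := sup'_prod_mul _ _ (fun w => hS₁0 w y₁) (fun w => hS₂0 w y₂)


end QIF5
end

section
/- For any jointly supported prior π on X₁ × X₂ and channels C₁, C₂, the g-leakage of the parallel composition satisfies I_g(π, C₁ × C₂) ≤ I_{g₁}(π₁, C₁) + I_{g₂}(π₂, C₂) + log(M^max_{g,π} / M^min_{g,π}), and I_g(π, C₁ × C₂) ≥ I_{g₁}(π₁, C₁) + I_{g₂}(π₂, C₂) − log(M^max_{g,π} / M^min_{g,π}). -/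
open Finset

namespace QIF6

noncomputable def marg1 {X₁ X₂ : Type*} [Fintype X₂] (π : X₁ × X₂ → ℝ) (x₁ : X₁) : ℝ :=
  ∑ x₂, π (x₁, x₂)

noncomputable def marg2 {X₁ X₂ : Type*} [Fintype X₁] (π : X₁ × X₂ → ℝ) (x₂ : X₂) : ℝ :=
  ∑ x₁, π (x₁, x₂)

/-- Prior g-vulnerability. -/
noncomputable def Vg {X W : Type*} [Fintype X] [Fintype W] [Nonempty W]
    (π : X → ℝ) (g : W → X → ℝ) : ℝ :=
  Finset.univ.sup' Finset.univ_nonempty fun w => ∑ x, π x * g w x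

/-- Posterior g-vulnerability. -/
noncomputable def VgPost {X Y W : Type*} [Fintype X] [Fintype Y] [Fintype W] [Nonempty W]
    (π : X → ℝ) (C : X → Y → ℝ) (g : W → X → ℝ) : ℝ :=
  ∑ y, Finset.univ.sup' Finset.univ_nonempty fun w => ∑ x, π x * C x y * g w x

/-- g-leakage `I_g(π,C) = log (V_g(π,C) / V_g(π))` (in bits). -/
noncomputable def Ig {X Y W : Type*} [Fintype X] [Fintype Y] [Fintype W] [Nonempty W]
    (π : X → ℝ) (C : X → Y → ℝ) (g : W → X → ℝ) : ℝ :=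
  Real.logb 2 (VgPost π C g / Vg π g)

noncomputable def parC {X₁ X₂ Y₁ Y₂ : Type*}
    (C₁ : X₁ → Y₁ → ℝ) (C₂ : X₂ → Y₂ → ℝ) : X₁ × X₂ → Y₁ × Y₂ → ℝ :=
  fun p q => C₁ p.1 q.1 * C₂ p.2 q.2

noncomputable def gRatio {X₁ X₂ W₁ W₂ : Type*} [Fintype X₁] [Fintype X₂]
    (π : X₁ × X₂ → ℝ) (g₁ : W₁ → X₁ → ℝ) (g₂ : W₂ → X₂ → ℝ)
    (g : W₁ × W₂ → X₁ × X₂ → ℝ) (p : (W₁ × W₂) × (X₁ × X₂)) : ℝ :=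
  (marg1 π p.2.1 * g₁ p.1.1 p.2.1) * (marg2 π p.2.2 * g₂ p.1.2 p.2.2)
    / (π p.2 * g p.1 p.2)

/-- Helper: bounds on the product of two suprema via a joint function. -/
lemma sup_prod_bound {W₁ W₂ : Type*} [Fintype W₁] [Fintype W₂] [Nonempty W₁] [Nonempty W₂]
    (m M : ℝ) (hM : 0 ≤ M)
    (a : W₁ × W₂ → ℝ) (b₁ : W₁ → ℝ) (b₂ : W₂ → ℝ)
    (hb₁ : ∀ w, 0 ≤ b₁ w) (hb₂ : ∀ w, 0 ≤ b₂ w)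
    (hlow : ∀ w₁ w₂, m * a (w₁, w₂) ≤ b₁ w₁ * b₂ w₂)
    (hhigh : ∀ w₁ w₂, b₁ w₁ * b₂ w₂ ≤ M * a (w₁, w₂)) :
    m * (Finset.univ.sup' Finset.univ_nonempty a)
        ≤ (Finset.univ.sup' Finset.univ_nonempty b₁)
            * (Finset.univ.sup' Finset.univ_nonempty b₂)
      ∧ (Finset.univ.sup' Finset.univ_nonempty b₁)
            * (Finset.univ.sup' Finset.univ_nonempty b₂)
        ≤ M * (Finset.univ.sup' Finset.univ_nonempty a) := by
  constructor
  · obtain ⟨w, -, hw⟩ := Finset.exists_mem_eq_sup' Finset.univ_nonempty a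
    rw [hw]
    calc m * a w = m * a (w.1, w.2) := by rw [Prod.mk.eta]
      _ ≤ b₁ w.1 * b₂ w.2 := hlow w.1 w.2
      _ ≤ (Finset.univ.sup' Finset.univ_nonempty b₁)
            * (Finset.univ.sup' Finset.univ_nonempty b₂) := by
          apply mul_le_mul (Finset.le_sup' b₁ (Finset.mem_univ _))
            (Finset.le_sup' b₂ (Finset.mem_univ _)) (hb₂ _)
          exact (hb₁ w.1).trans (Finset.le_sup' b₁ (Finset.mem_univ _))
  · obtain ⟨w₁, -, h1⟩ := Finset.exists_mem_eq_sup' Finset.univ_nonempty b₁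
    obtain ⟨w₂, -, h2⟩ := Finset.exists_mem_eq_sup' Finset.univ_nonempty b₂
    rw [h1, h2]
    calc b₁ w₁ * b₂ w₂ ≤ M * a (w₁, w₂) := hhigh w₁ w₂
      _ ≤ M * (Finset.univ.sup' Finset.univ_nonempty a) :=
          mul_le_mul_of_nonneg_left (Finset.le_sup' a (Finset.mem_univ _)) hM

/-- Bounds on the g-leakage of the parallel composition of two channels:
`|I_g(π, C₁×C₂) − I_{g₁}(π₁,C₁) − I_{g₂}(π₂,C₂)| ≤ log (M^max_{g,π} / M^min_{g,π})`. -/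
theorem g_leakage_parallel_bounds {X₁ X₂ Y₁ Y₂ W₁ W₂ : Type*}
    [Fintype X₁] [Fintype X₂] [Fintype Y₁] [Fintype Y₂] [Fintype W₁] [Fintype W₂]
    [Nonempty X₁] [Nonempty X₂] [Nonempty W₁] [Nonempty W₂]
    (π : X₁ × X₂ → ℝ) (C₁ : X₁ → Y₁ → ℝ) (C₂ : X₂ → Y₂ → ℝ)
    (g₁ : W₁ → X₁ → ℝ) (g₂ : W₂ → X₂ → ℝ) (g : W₁ × W₂ → X₁ × X₂ → ℝ)
    (hπ0 : ∀ p, 0 ≤ π p) (hπ1 : ∑ p, π p = 1)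
    (hC₁0 : ∀ x y, 0 ≤ C₁ x y) (hC₁1 : ∀ x, ∑ y, C₁ x y = 1)
    (hC₂0 : ∀ x y, 0 ≤ C₂ x y) (hC₂1 : ∀ x, ∑ y, C₂ x y = 1)
    (hg₁ : ∀ w x, g₁ w x ∈ Set.Icc (0:ℝ) 1)
    (hg₂ : ∀ w x, g₂ w x ∈ Set.Icc (0:ℝ) 1)
    (hg : ∀ w p, g w p ∈ Set.Icc (0:ℝ) 1)
    (hzero : ∀ w₁ w₂ x₁ x₂, g (w₁, w₂) (x₁, x₂) = 0 ↔ g₁ w₁ x₁ * g₂ w₂ x₂ = 0)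
    (hjs : ∀ x₁ x₂, marg1 π x₁ * marg2 π x₂ ≠ 0 → π (x₁, x₂) ≠ 0)
    (hS : (Finset.univ.filter
        (fun p : (W₁ × W₂) × (X₁ × X₂) => π p.2 * g p.1 p.2 ≠ 0)).Nonempty)
    (hV : 0 < Vg π g) (hVp : 0 < VgPost π (parC C₁ C₂) g)
    (hV₁ : 0 < Vg (marg1 π) g₁) (hVp₁ : 0 < VgPost (marg1 π) C₁ g₁)
    (hV₂ : 0 < Vg (marg2 π) g₂) (hVp₂ : 0 < VgPost (marg2 π) C₂ g₂) :
    Ig π (parC C₁ C₂) g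
        ≤ Ig (marg1 π) C₁ g₁ + Ig (marg2 π) C₂ g₂
          + Real.logb 2
            ((Finset.univ.filter
              (fun p : (W₁ × W₂) × (X₁ × X₂) => π p.2 * g p.1 p.2 ≠ 0)).sup' hS
                (gRatio π g₁ g₂ g)
            / (Finset.univ.filter
              (fun p : (W₁ × W₂) × (X₁ × X₂) => π p.2 * g p.1 p.2 ≠ 0)).inf' hS
                (gRatio π g₁ g₂ g))
      ∧ Ig (marg1 π) C₁ g₁ + Ig (marg2 π) C₂ g₂
          - Real.logb 2
            ((Finset.univ.filter
              (fun p : (W₁ × W₂) × (X₁ × X₂) => π p.2 * g p.1 p.2 ≠ 0)).sup' hS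
                (gRatio π g₁ g₂ g)
            / (Finset.univ.filter
              (fun p : (W₁ × W₂) × (X₁ × X₂) => π p.2 * g p.1 p.2 ≠ 0)).inf' hS
                (gRatio π g₁ g₂ g))
        ≤ Ig π (parC C₁ C₂) g := by
  classical
  set S : Finset ((W₁ × W₂) × (X₁ × X₂)) :=
    Finset.univ.filter (fun p => π p.2 * g p.1 p.2 ≠ 0) with hSdef
  set m : ℝ := S.inf' hS (gRatio π g₁ g₂ g) with hmdef
  set M : ℝ := S.sup' hS (gRatio π g₁ g₂ g) with hMdef
  have hm10 : ∀ x₁, 0 ≤ marg1 π x₁ := fun x₁ =>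
    Finset.sum_nonneg fun x₂ _ => hπ0 _
  have hm20 : ∀ x₂, 0 ≤ marg2 π x₂ := fun x₂ =>
    Finset.sum_nonneg fun x₁ _ => hπ0 _
  -- m is positive
  have hm_pos : 0 < m := by
    rw [hmdef, Finset.lt_inf'_iff]
    intro p hp
    obtain ⟨-, hne⟩ := Finset.mem_filter.mp hp
    have hπp : 0 < π p.2 := lt_of_le_of_ne (hπ0 _) (Ne.symm (left_ne_zero_of_mul hne))
    have hgp : g p.1 p.2 ≠ 0 := right_ne_zero_of_mul hne
    have hgg : g₁ p.1.1 p.2.1 * g₂ p.1.2 p.2.2 ≠ 0 := by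
      intro h
      exact hgp ((hzero p.1.1 p.1.2 p.2.1 p.2.2).mpr h)
    have hg1p : 0 < g₁ p.1.1 p.2.1 :=
      lt_of_le_of_ne (hg₁ _ _).1 (Ne.symm (left_ne_zero_of_mul hgg))
    have hg2p : 0 < g₂ p.1.2 p.2.2 :=
      lt_of_le_of_ne (hg₂ _ _).1 (Ne.symm (right_ne_zero_of_mul hgg))
    have hm1p : 0 < marg1 π p.2.1 := by
      have h := Finset.single_le_sum (f := fun x₂ => π (p.2.1, x₂))
        (fun i _ => hπ0 _) (Finset.mem_univ p.2.2)
      exact lt_of_lt_of_le hπp h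
    have hm2p : 0 < marg2 π p.2.2 := by
      have h := Finset.single_le_sum (f := fun x₁ => π (x₁, p.2.2))
        (fun i _ => hπ0 _) (Finset.mem_univ p.2.1)
      exact lt_of_lt_of_le hπp h
    have hden : 0 < π p.2 * g p.1 p.2 :=
      lt_of_le_of_ne (mul_nonneg (hπ0 _) (hg _ _).1) (Ne.symm hne)
    simp only [gRatio]
    exact div_pos (mul_pos (mul_pos hm1p hg1p) (mul_pos hm2p hg2p)) hden
  have hmM : m ≤ M := by
    obtain ⟨p, hp⟩ := hS
    exact le_trans (Finset.inf'_le _ hp) (Finset.le_sup' _ hp)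
  have hM0 : 0 ≤ M := hm_pos.le.trans hmM
  -- key pointwise bounds
  have key : ∀ w₁ w₂ x₁ x₂,
      m * (π (x₁, x₂) * g (w₁, w₂) (x₁, x₂))
          ≤ (marg1 π x₁ * g₁ w₁ x₁) * (marg2 π x₂ * g₂ w₂ x₂)
        ∧ (marg1 π x₁ * g₁ w₁ x₁) * (marg2 π x₂ * g₂ w₂ x₂)
          ≤ M * (π (x₁, x₂) * g (w₁, w₂) (x₁, x₂)) := by
    intro w₁ w₂ x₁ x₂
    by_cases hd : π (x₁, x₂) * g (w₁, w₂) (x₁, x₂) = 0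
    · constructor
      · rw [hd, mul_zero]
        exact mul_nonneg (mul_nonneg (hm10 _) (hg₁ _ _).1)
          (mul_nonneg (hm20 _) (hg₂ _ _).1)
      · rw [hd, mul_zero]
        rcases mul_eq_zero.mp hd with h | h
        · have hmm : marg1 π x₁ * marg2 π x₂ = 0 := by
            by_contra hne
            exact (hjs x₁ x₂ hne) h
          refine le_of_eq ?_
          calc (marg1 π x₁ * g₁ w₁ x₁) * (marg2 π x₂ * g₂ w₂ x₂)
              = (marg1 π x₁ * marg2 π x₂) * (g₁ w₁ x₁ * g₂ w₂ x₂) := by ring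
            _ = 0 := by rw [hmm, zero_mul]
        · have hgg : g₁ w₁ x₁ * g₂ w₂ x₂ = 0 := (hzero w₁ w₂ x₁ x₂).mp h
          refine le_of_eq ?_
          calc (marg1 π x₁ * g₁ w₁ x₁) * (marg2 π x₂ * g₂ w₂ x₂)
              = (marg1 π x₁ * marg2 π x₂) * (g₁ w₁ x₁ * g₂ w₂ x₂) := by ring
            _ = 0 := by rw [hgg, mul_zero]
    · have hpS : ((w₁, w₂), (x₁, x₂)) ∈ S := by
        rw [hSdef]
        exact Finset.mem_filter.mpr ⟨Finset.mem_univ _, hd⟩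
      have hden : 0 < π (x₁, x₂) * g (w₁, w₂) (x₁, x₂) :=
        lt_of_le_of_ne (mul_nonneg (hπ0 _) (hg _ _).1) (Ne.symm hd)
      have h1 : m ≤ gRatio π g₁ g₂ g ((w₁, w₂), (x₁, x₂)) := Finset.inf'_le _ hpS
      have h2 : gRatio π g₁ g₂ g ((w₁, w₂), (x₁, x₂)) ≤ M := Finset.le_sup' _ hpS
      have hR : gRatio π g₁ g₂ g ((w₁, w₂), (x₁, x₂))
          * (π (x₁, x₂) * g (w₁, w₂) (x₁, x₂))
          = (marg1 π x₁ * g₁ w₁ x₁) * (marg2 π x₂ * g₂ w₂ x₂) := by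
        simp only [gRatio]
        exact div_mul_cancel₀ _ hd
      constructor
      · calc m * (π (x₁, x₂) * g (w₁, w₂) (x₁, x₂))
            ≤ gRatio π g₁ g₂ g ((w₁, w₂), (x₁, x₂))
                * (π (x₁, x₂) * g (w₁, w₂) (x₁, x₂)) :=
              mul_le_mul_of_nonneg_right h1 hden.le
          _ = _ := hR
      · calc (marg1 π x₁ * g₁ w₁ x₁) * (marg2 π x₂ * g₂ w₂ x₂)
            = gRatio π g₁ g₂ g ((w₁, w₂), (x₁, x₂))
                * (π (x₁, x₂) * g (w₁, w₂) (x₁, x₂)) := hR.symm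
          _ ≤ M * (π (x₁, x₂) * g (w₁, w₂) (x₁, x₂)) :=
              mul_le_mul_of_nonneg_right h2 hden.le
  -- prior vulnerability bounds
  have hVprior : m * Vg π g ≤ Vg (marg1 π) g₁ * Vg (marg2 π) g₂
      ∧ Vg (marg1 π) g₁ * Vg (marg2 π) g₂ ≤ M * Vg π g := by
    refine sup_prod_bound m M hM0
      (fun w => ∑ x, π x * g w x)
      (fun w₁ => ∑ x₁, marg1 π x₁ * g₁ w₁ x₁)
      (fun w₂ => ∑ x₂, marg2 π x₂ * g₂ w₂ x₂)
      (fun w₁ => Finset.sum_nonneg fun x₁ _ => mul_nonneg (hm10 _) (hg₁ _ _).1)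
      (fun w₂ => Finset.sum_nonneg fun x₂ _ => mul_nonneg (hm20 _) (hg₂ _ _).1)
      (fun w₁ w₂ => ?_) (fun w₁ w₂ => ?_)
    · rw [Finset.sum_mul_sum, Finset.mul_sum, Fintype.sum_prod_type]
      exact Finset.sum_le_sum fun x₁ _ => Finset.sum_le_sum fun x₂ _ =>
        (key w₁ w₂ x₁ x₂).1
    · rw [Finset.sum_mul_sum, Finset.mul_sum, Fintype.sum_prod_type]
      exact Finset.sum_le_sum fun x₁ _ => Finset.sum_le_sum fun x₂ _ =>
        (key w₁ w₂ x₁ x₂).2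
  -- posterior vulnerability bounds
  have hVpost : m * VgPost π (parC C₁ C₂) g
        ≤ VgPost (marg1 π) C₁ g₁ * VgPost (marg2 π) C₂ g₂
      ∧ VgPost (marg1 π) C₁ g₁ * VgPost (marg2 π) C₂ g₂
        ≤ M * VgPost π (parC C₁ C₂) g := by
    constructor
    · unfold VgPost
      rw [Finset.sum_mul_sum, Finset.mul_sum, Fintype.sum_prod_type]
      refine Finset.sum_le_sum fun y₁ _ => Finset.sum_le_sum fun y₂ _ => ?_
      refine (sup_prod_bound m M hM0
        (fun w => ∑ x, π x * parC C₁ C₂ x (y₁, y₂) * g w x)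
        (fun w₁ => ∑ x₁, marg1 π x₁ * C₁ x₁ y₁ * g₁ w₁ x₁)
        (fun w₂ => ∑ x₂, marg2 π x₂ * C₂ x₂ y₂ * g₂ w₂ x₂)
        (fun w₁ => Finset.sum_nonneg fun x₁ _ =>
          mul_nonneg (mul_nonneg (hm10 _) (hC₁0 _ _)) (hg₁ _ _).1)
        (fun w₂ => Finset.sum_nonneg fun x₂ _ =>
          mul_nonneg (mul_nonneg (hm20 _) (hC₂0 _ _)) (hg₂ _ _).1)
        (fun w₁ w₂ => ?_) (fun w₁ w₂ => ?_)).1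
      · rw [Finset.sum_mul_sum, Finset.mul_sum, Fintype.sum_prod_type]
        refine Finset.sum_le_sum fun x₁ _ => Finset.sum_le_sum fun x₂ _ => ?_
        calc m * (π (x₁, x₂) * parC C₁ C₂ (x₁, x₂) (y₁, y₂) * g (w₁, w₂) (x₁, x₂))
            = m * (π (x₁, x₂) * g (w₁, w₂) (x₁, x₂)) * (C₁ x₁ y₁ * C₂ x₂ y₂) := by
              simp only [parC]; ring
          _ ≤ (marg1 π x₁ * g₁ w₁ x₁) * (marg2 π x₂ * g₂ w₂ x₂)
                * (C₁ x₁ y₁ * C₂ x₂ y₂) :=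
              mul_le_mul_of_nonneg_right (key w₁ w₂ x₁ x₂).1
                (mul_nonneg (hC₁0 _ _) (hC₂0 _ _))
          _ = (marg1 π x₁ * C₁ x₁ y₁ * g₁ w₁ x₁)
                * (marg2 π x₂ * C₂ x₂ y₂ * g₂ w₂ x₂) := by ring
      · rw [Finset.sum_mul_sum, Finset.mul_sum, Fintype.sum_prod_type]
        refine Finset.sum_le_sum fun x₁ _ => Finset.sum_le_sum fun x₂ _ => ?_
        calc (marg1 π x₁ * C₁ x₁ y₁ * g₁ w₁ x₁)
              * (marg2 π x₂ * C₂ x₂ y₂ * g₂ w₂ x₂)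
            = (marg1 π x₁ * g₁ w₁ x₁) * (marg2 π x₂ * g₂ w₂ x₂)
                * (C₁ x₁ y₁ * C₂ x₂ y₂) := by ring
          _ ≤ M * (π (x₁, x₂) * g (w₁, w₂) (x₁, x₂)) * (C₁ x₁ y₁ * C₂ x₂ y₂) :=
              mul_le_mul_of_nonneg_right (key w₁ w₂ x₁ x₂).2
                (mul_nonneg (hC₁0 _ _) (hC₂0 _ _))
          _ = M * (π (x₁, x₂) * parC C₁ C₂ (x₁, x₂) (y₁, y₂) * g (w₁, w₂) (x₁, x₂)) := by
              simp only [parC]; ring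
    · unfold VgPost
      rw [Finset.sum_mul_sum, Finset.mul_sum, Fintype.sum_prod_type]
      refine Finset.sum_le_sum fun y₁ _ => Finset.sum_le_sum fun y₂ _ => ?_
      refine (sup_prod_bound m M hM0
        (fun w => ∑ x, π x * parC C₁ C₂ x (y₁, y₂) * g w x)
        (fun w₁ => ∑ x₁, marg1 π x₁ * C₁ x₁ y₁ * g₁ w₁ x₁)
        (fun w₂ => ∑ x₂, marg2 π x₂ * C₂ x₂ y₂ * g₂ w₂ x₂)
        (fun w₁ => Finset.sum_nonneg fun x₁ _ =>
          mul_nonneg (mul_nonneg (hm10 _) (hC₁0 _ _)) (hg₁ _ _).1)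
        (fun w₂ => Finset.sum_nonneg fun x₂ _ =>
          mul_nonneg (mul_nonneg (hm20 _) (hC₂0 _ _)) (hg₂ _ _).1)
        (fun w₁ w₂ => ?_) (fun w₁ w₂ => ?_)).2
      · rw [Finset.sum_mul_sum, Finset.mul_sum, Fintype.sum_prod_type]
        refine Finset.sum_le_sum fun x₁ _ => Finset.sum_le_sum fun x₂ _ => ?_
        calc m * (π (x₁, x₂) * parC C₁ C₂ (x₁, x₂) (y₁, y₂) * g (w₁, w₂) (x₁, x₂))
            = m * (π (x₁, x₂) * g (w₁, w₂) (x₁, x₂)) * (C₁ x₁ y₁ * C₂ x₂ y₂) := by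
              simp only [parC]; ring
          _ ≤ (marg1 π x₁ * g₁ w₁ x₁) * (marg2 π x₂ * g₂ w₂ x₂)
                * (C₁ x₁ y₁ * C₂ x₂ y₂) :=
              mul_le_mul_of_nonneg_right (key w₁ w₂ x₁ x₂).1
                (mul_nonneg (hC₁0 _ _) (hC₂0 _ _))
          _ = (marg1 π x₁ * C₁ x₁ y₁ * g₁ w₁ x₁)
                * (marg2 π x₂ * C₂ x₂ y₂ * g₂ w₂ x₂) := by ring
      · rw [Finset.sum_mul_sum, Finset.mul_sum, Fintype.sum_prod_type]
        refine Finset.sum_le_sum fun x₁ _ => Finset.sum_le_sum fun x₂ _ => ?_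
        calc (marg1 π x₁ * C₁ x₁ y₁ * g₁ w₁ x₁)
              * (marg2 π x₂ * C₂ x₂ y₂ * g₂ w₂ x₂)
            = (marg1 π x₁ * g₁ w₁ x₁) * (marg2 π x₂ * g₂ w₂ x₂)
                * (C₁ x₁ y₁ * C₂ x₂ y₂) := by ring
          _ ≤ M * (π (x₁, x₂) * g (w₁, w₂) (x₁, x₂)) * (C₁ x₁ y₁ * C₂ x₂ y₂) :=
              mul_le_mul_of_nonneg_right (key w₁ w₂ x₁ x₂).2
                (mul_nonneg (hC₁0 _ _) (hC₂0 _ _))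
          _ = M * (π (x₁, x₂) * parC C₁ C₂ (x₁, x₂) (y₁, y₂) * g (w₁, w₂) (x₁, x₂)) := by
              simp only [parC]; ring
  -- final log computation
  have hMm : 0 < M / m := div_pos (hm_pos.trans_le hmM) hm_pos
  have hA₁ : 0 < VgPost (marg1 π) C₁ g₁ / Vg (marg1 π) g₁ := div_pos hVp₁ hV₁
  have hA₂ : 0 < VgPost (marg2 π) C₂ g₂ / Vg (marg2 π) g₂ := div_pos hVp₂ hV₂
  have hD : 0 < VgPost π (parC C₁ C₂) g / Vg π g := div_pos hVp hV
  simp only [Ig]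
  constructor
  · have hstep : VgPost π (parC C₁ C₂) g / Vg π g
        ≤ (VgPost (marg1 π) C₁ g₁ / Vg (marg1 π) g₁)
            * (VgPost (marg2 π) C₂ g₂ / Vg (marg2 π) g₂) * (M / m) := by
      rw [div_mul_div_comm, div_mul_div_comm,
        div_le_div_iff₀ hV (mul_pos (mul_pos hV₁ hV₂) hm_pos)]
      nlinarith [mul_le_mul hVpost.1 hVprior.2
        (mul_nonneg hV₁.le hV₂.le) (mul_nonneg hVp₁.le hVp₂.le)]
    calc Real.logb 2 (VgPost π (parC C₁ C₂) g / Vg π g)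
        ≤ Real.logb 2 ((VgPost (marg1 π) C₁ g₁ / Vg (marg1 π) g₁)
            * (VgPost (marg2 π) C₂ g₂ / Vg (marg2 π) g₂) * (M / m)) :=
          Real.logb_le_logb_of_le one_lt_two hD hstep
      _ = _ := by
          rw [Real.logb_mul (mul_pos hA₁ hA₂).ne' hMm.ne',
            Real.logb_mul hA₁.ne' hA₂.ne']
  · have hstep : (VgPost (marg1 π) C₁ g₁ / Vg (marg1 π) g₁)
            * (VgPost (marg2 π) C₂ g₂ / Vg (marg2 π) g₂) * (m / M)
        ≤ VgPost π (parC C₁ C₂) g / Vg π g := by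
      rw [div_mul_div_comm, div_mul_div_comm,
        div_le_div_iff₀ (mul_pos (mul_pos hV₁ hV₂) (hm_pos.trans_le hmM)) hV]
      nlinarith [mul_le_mul hVpost.2 hVprior.1
        (mul_nonneg hm_pos.le hV.le) (mul_nonneg hM0 hVp.le)]
    have heq : Real.logb 2 (VgPost (marg1 π) C₁ g₁ / Vg (marg1 π) g₁)
          + Real.logb 2 (VgPost (marg2 π) C₂ g₂ / Vg (marg2 π) g₂)
          - Real.logb 2 (M / m)
        = Real.logb 2 ((VgPost (marg1 π) C₁ g₁ / Vg (marg1 π) g₁)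
            * (VgPost (marg2 π) C₂ g₂ / Vg (marg2 π) g₂) * (m / M)) := by
      rw [Real.logb_mul (mul_pos hA₁ hA₂).ne'
          (div_pos hm_pos (hm_pos.trans_le hmM)).ne',
        Real.logb_mul hA₁.ne' hA₂.ne',
        Real.logb_div (hm_pos.trans_le hmM).ne' hm_pos.ne',
        Real.logb_div hm_pos.ne' (hm_pos.trans_le hmM).ne']
      ring
    rw [heq]
    exact Real.logb_le_logb_of_le one_lt_two (mul_pos (mul_pos hA₁ hA₂) (div_pos hm_pos (hm_pos.trans_le hmM))) hstep

end QIF6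
end

section
/- For any prior π on X and any two channels C₁ : X × Y₁ → [0,1], C₂ : X × Y₂ → [0,1] sharing the same input, the posterior g-entropy of the shared-input parallel composition satisfies H_g(π, C₁ ∥ C₂) ≥ H_g(π, C₁) + H_g(π, C₂) − H^min_g(π), where H^min_g(π) = −log min{π[x]g(w,x) : x ∈ X, w ∈ W, π[x]g(w,x) ≠ 0}. Equivalently in vulnerability form: V_g(π, C₁ ∥ C₂) · m ≤ V_g(π, C₁) · V_g(π, C₂), where m = min{π[x]g(w,x) : π[x]g(w,x) ≠ 0}. -/
open Finset

namespace QIF8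

/-- Posterior g-vulnerability. -/
noncomputable def VgPost {X Y W : Type*} [Fintype X] [Fintype Y] [Fintype W] [Nonempty W]
    (π : X → ℝ) (C : X → Y → ℝ) (g : W → X → ℝ) : ℝ :=
  ∑ y, Finset.univ.sup' Finset.univ_nonempty fun w => ∑ x, π x * C x y * g w x

/-- Parallel composition with shared input. -/
noncomputable def shParC {X Y₁ Y₂ : Type*}
    (C₁ : X → Y₁ → ℝ) (C₂ : X → Y₂ → ℝ) : X → Y₁ × Y₂ → ℝ :=
  fun x q => C₁ x q.1 * C₂ x q.2

/-- `V_g(π, C₁ ∥ C₂) · m ≤ V_g(π, C₁) · V_g(π, C₂)` where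
`m = min { π[x]·g(w,x) : π[x]·g(w,x) ≠ 0 }`, equivalently
`H_g(π, C₁ ∥ C₂) ≥ H_g(π, C₁) + H_g(π, C₂) − H^min_g(π)`. -/
theorem shared_posterior_g_entropy_lower {X Y₁ Y₂ W : Type*}
    [Fintype X] [Fintype Y₁] [Fintype Y₂] [Fintype W]
    [Nonempty X] [Nonempty W]
    (π : X → ℝ) (C₁ : X → Y₁ → ℝ) (C₂ : X → Y₂ → ℝ) (g : W → X → ℝ)
    (hπ0 : ∀ x, 0 ≤ π x) (hπ1 : ∑ x, π x = 1)
    (hC₁0 : ∀ x y, 0 ≤ C₁ x y) (hC₁1 : ∀ x, ∑ y, C₁ x y = 1)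
    (hC₂0 : ∀ x y, 0 ≤ C₂ x y) (hC₂1 : ∀ x, ∑ y, C₂ x y = 1)
    (hg : ∀ w x, g w x ∈ Set.Icc (0:ℝ) 1)
    (hS : (Finset.univ.filter
        (fun p : W × X => π p.2 * g p.1 p.2 ≠ 0)).Nonempty) :
    VgPost π (shParC C₁ C₂) g * (Finset.univ.filter
        (fun p : W × X => π p.2 * g p.1 p.2 ≠ 0)).inf' hS
          (fun p => π p.2 * g p.1 p.2)
      ≤ VgPost π C₁ g * VgPost π C₂ g := by
  classical
  set m := (Finset.univ.filter
        (fun p : W × X => π p.2 * g p.1 p.2 ≠ 0)).inf' hS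
          (fun p => π p.2 * g p.1 p.2) with hm
  have hm0 : 0 ≤ m := by
    apply Finset.le_inf'
    intro p hp
    exact mul_nonneg (hπ0 _) (hg _ _).1
  have key : ∀ (w : W) (x : X), m * (π x * g w x) ≤ (π x * g w x) * (π x * g w x) := by
    intro w x
    by_cases h : π x * g w x = 0
    · simp [h]
    · have hmem : (w, x) ∈ Finset.univ.filter
          (fun p : W × X => π p.2 * g p.1 p.2 ≠ 0) :=
        Finset.mem_filter.mpr ⟨Finset.mem_univ _, h⟩
      have := Finset.inf'_le (fun p : W × X => π p.2 * g p.1 p.2) hmem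
      exact mul_le_mul_of_nonneg_right this (mul_nonneg (hπ0 _) (hg _ _).1)
  -- nonnegativity of term functions
  have ha0 : ∀ (y : Y₁) (w : W) (x : X), 0 ≤ π x * C₁ x y * g w x := fun y w x =>
    mul_nonneg (mul_nonneg (hπ0 _) (hC₁0 _ _)) (hg _ _).1
  have hb0 : ∀ (y : Y₂) (w : W) (x : X), 0 ≤ π x * C₂ x y * g w x := fun y w x =>
    mul_nonneg (mul_nonneg (hπ0 _) (hC₂0 _ _)) (hg _ _).1
  have hA0 : ∀ (y : Y₁), 0 ≤ Finset.univ.sup' Finset.univ_nonempty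
      fun w => ∑ x, π x * C₁ x y * g w x := by
    intro y
    obtain ⟨w⟩ := ‹Nonempty W›
    refine le_trans ?_ (Finset.le_sup' _ (Finset.mem_univ w))
    exact Finset.sum_nonneg fun x _ => ha0 y w x
  have hB0 : ∀ (y : Y₂), 0 ≤ Finset.univ.sup' Finset.univ_nonempty
      fun w => ∑ x, π x * C₂ x y * g w x := by
    intro y
    obtain ⟨w⟩ := ‹Nonempty W›
    refine le_trans ?_ (Finset.le_sup' _ (Finset.mem_univ w))
    exact Finset.sum_nonneg fun x _ => hb0 y w x
  unfold VgPost shParC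
  rw [Finset.sum_mul_sum, Fintype.sum_prod_type, Finset.sum_mul]
  refine Finset.sum_le_sum fun y₁ _ => ?_
  rw [Finset.sum_mul]
  refine Finset.sum_le_sum fun y₂ _ => ?_
  obtain ⟨w₀, -, hw₀⟩ := Finset.exists_mem_eq_sup' Finset.univ_nonempty
    (fun w => ∑ x, π x * (C₁ x (y₁, y₂).1 * C₂ x (y₁, y₂).2) * g w x)
  rw [hw₀]
  calc (∑ x, π x * (C₁ x y₁ * C₂ x y₂) * g w₀ x) * m
      ≤ ∑ x, (π x * C₁ x y₁ * g w₀ x) * (π x * C₂ x y₂ * g w₀ x) := by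
        rw [Finset.sum_mul]
        refine Finset.sum_le_sum fun x _ => ?_
        have h1 := key w₀ x
        have h2 := mul_le_mul_of_nonneg_right h1
          (mul_nonneg (hC₁0 x y₁) (hC₂0 x y₂))
        calc π x * (C₁ x y₁ * C₂ x y₂) * g w₀ x * m
            = m * (π x * g w₀ x) * (C₁ x y₁ * C₂ x y₂) := by ring
          _ ≤ (π x * g w₀ x) * (π x * g w₀ x) * (C₁ x y₁ * C₂ x y₂) := h2
          _ = (π x * C₁ x y₁ * g w₀ x) * (π x * C₂ x y₂ * g w₀ x) := by ring
    _ ≤ (∑ x, π x * C₁ x y₁ * g w₀ x) * (∑ x, π x * C₂ x y₂ * g w₀ x) := by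
        rw [Finset.sum_mul]
        refine Finset.sum_le_sum fun x _ => ?_
        refine mul_le_mul_of_nonneg_left ?_ (ha0 y₁ w₀ x)
        exact Finset.single_le_sum (fun x' _ => hb0 y₂ w₀ x') (Finset.mem_univ x)
    _ ≤ (Finset.univ.sup' Finset.univ_nonempty fun w => ∑ x, π x * C₁ x y₁ * g w x) *
        (Finset.univ.sup' Finset.univ_nonempty fun w => ∑ x, π x * C₂ x y₂ * g w x) := by
        exact mul_le_mul
          (Finset.le_sup' (fun w => ∑ x, π x * C₁ x y₁ * g w x) (Finset.mem_univ w₀))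
          (Finset.le_sup' (fun w => ∑ x, π x * C₂ x y₂ * g w x) (Finset.mem_univ w₀))
          (Finset.sum_nonneg fun x _ => hb0 y₂ w₀ x) (hA0 y₁)

end QIF8
end

section
/- For any prior π on X₁ × X₂ with marginals π₁, π₂ and channels C₁, C₂, the posterior vulnerability of the parallel composition satisfies V(π, C₁ × C₂) · M^min_{∞,π} ≤ V(π₁, C₁) · V(π₂, C₂), where M^min_{∞,π} = min over (x₁,x₂) with π[x₁,x₂] ≠ 0 of π₁[x₁]π₂[x₂]/π[x₁,x₂]; equivalently, H_∞(π, C₁ × C₂) ≥ H_∞(π₁, C₁) + H_∞(π₂, C₂) + log M^min_{∞,π}. -/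
open Finset

namespace QIF10

noncomputable def marg1 {X₁ X₂ : Type*} [Fintype X₂] (π : X₁ × X₂ → ℝ) (x₁ : X₁) : ℝ :=
  ∑ x₂, π (x₁, x₂)

noncomputable def marg2 {X₁ X₂ : Type*} [Fintype X₁] (π : X₁ × X₂ → ℝ) (x₂ : X₂) : ℝ :=
  ∑ x₁, π (x₁, x₂)

/-- Posterior vulnerability `V(π,C) = ∑_y max_x π[x] C[x,y]`. -/
noncomputable def Vpost {X Y : Type*} [Fintype X] [Fintype Y] [Nonempty X]
    (π : X → ℝ) (C : X → Y → ℝ) : ℝ :=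
  ∑ y, Finset.univ.sup' Finset.univ_nonempty fun x => π x * C x y

/-- Parallel composition with distinct inputs. -/
noncomputable def parC {X₁ X₂ Y₁ Y₂ : Type*}
    (C₁ : X₁ → Y₁ → ℝ) (C₂ : X₂ → Y₂ → ℝ) : X₁ × X₂ → Y₁ × Y₂ → ℝ :=
  fun p q => C₁ p.1 q.1 * C₂ p.2 q.2

/-- `V(π, C₁ × C₂) · M^min_{∞,π} ≤ V(π₁, C₁) · V(π₂, C₂)`, equivalently
`H_∞(π, C₁ × C₂) ≥ H_∞(π₁, C₁) + H_∞(π₂, C₂) + log M^min_{∞,π}`. -/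
theorem min_entropy_posterior_lower {X₁ X₂ Y₁ Y₂ : Type*}
    [Fintype X₁] [Fintype X₂] [Fintype Y₁] [Fintype Y₂]
    [Nonempty X₁] [Nonempty X₂]
    (π : X₁ × X₂ → ℝ) (C₁ : X₁ → Y₁ → ℝ) (C₂ : X₂ → Y₂ → ℝ)
    (hπ0 : ∀ p, 0 ≤ π p) (hπ1 : ∑ p, π p = 1)
    (hC₁0 : ∀ x y, 0 ≤ C₁ x y) (hC₁1 : ∀ x, ∑ y, C₁ x y = 1)
    (hC₂0 : ∀ x y, 0 ≤ C₂ x y) (hC₂1 : ∀ x, ∑ y, C₂ x y = 1)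
    (hS : (Finset.univ.filter (fun p : X₁ × X₂ => π p ≠ 0)).Nonempty) :
    Vpost π (parC C₁ C₂) *
        (Finset.univ.filter (fun p : X₁ × X₂ => π p ≠ 0)).inf' hS
          (fun p => marg1 π p.1 * marg2 π p.2 / π p)
      ≤ Vpost (marg1 π) C₁ * Vpost (marg2 π) C₂ := by
  classical
  set S := Finset.univ.filter (fun p : X₁ × X₂ => π p ≠ 0) with hSdef
  set m := S.inf' hS (fun p => marg1 π p.1 * marg2 π p.2 / π p) with hmdef
  have hmarg1 : ∀ x₁, 0 ≤ marg1 π x₁ := fun x₁ =>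
    Finset.sum_nonneg fun x₂ _ => hπ0 _
  have hmarg2 : ∀ x₂, 0 ≤ marg2 π x₂ := fun x₂ =>
    Finset.sum_nonneg fun x₁ _ => hπ0 _
  have hm0 : 0 ≤ m := by
    apply Finset.le_inf'
    intro p hp
    have hpne : π p ≠ 0 := (Finset.mem_filter.mp hp).2
    have hppos : 0 < π p := lt_of_le_of_ne (hπ0 p) (Ne.symm hpne)
    exact div_nonneg (mul_nonneg (hmarg1 _) (hmarg2 _)) hppos.le
  have key : ∀ p : X₁ × X₂, π p * m ≤ marg1 π p.1 * marg2 π p.2 := by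
    intro p
    by_cases hp : π p = 0
    · rw [hp, zero_mul]
      exact mul_nonneg (hmarg1 _) (hmarg2 _)
    · have hppos : 0 < π p := lt_of_le_of_ne (hπ0 p) (Ne.symm hp)
      have hmem : p ∈ S := Finset.mem_filter.mpr ⟨Finset.mem_univ _, hp⟩
      have := Finset.inf'_le (fun p => marg1 π p.1 * marg2 π p.2 / π p) hmem
      calc π p * m ≤ π p * (marg1 π p.1 * marg2 π p.2 / π p) := by
            exact mul_le_mul_of_nonneg_left this hppos.le
        _ = marg1 π p.1 * marg2 π p.2 := by field_simp
  have hsup1 : ∀ y₁, 0 ≤ Finset.univ.sup' Finset.univ_nonempty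
      (fun x₁ => marg1 π x₁ * C₁ x₁ y₁) := by
    intro y₁
    obtain ⟨x₁⟩ := ‹Nonempty X₁›
    exact le_trans (mul_nonneg (hmarg1 x₁) (hC₁0 x₁ y₁))
      (Finset.le_sup' (fun x₁ => marg1 π x₁ * C₁ x₁ y₁) (Finset.mem_univ x₁))
  have hsup2 : ∀ y₂, 0 ≤ Finset.univ.sup' Finset.univ_nonempty
      (fun x₂ => marg2 π x₂ * C₂ x₂ y₂) := by
    intro y₂
    obtain ⟨x₂⟩ := ‹Nonempty X₂›
    exact le_trans (mul_nonneg (hmarg2 x₂) (hC₂0 x₂ y₂))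
      (Finset.le_sup' (fun x₂ => marg2 π x₂ * C₂ x₂ y₂) (Finset.mem_univ x₂))
  rw [Vpost, Finset.sum_mul]
  have step : ∀ q : Y₁ × Y₂,
      (Finset.univ.sup' Finset.univ_nonempty fun p : X₁ × X₂ => π p * parC C₁ C₂ p q) * m
        ≤ (Finset.univ.sup' Finset.univ_nonempty fun x₁ => marg1 π x₁ * C₁ x₁ q.1) *
          (Finset.univ.sup' Finset.univ_nonempty fun x₂ => marg2 π x₂ * C₂ x₂ q.2) := by
    intro q
    obtain ⟨p₀, _, hp₀⟩ := Finset.exists_mem_eq_sup' Finset.univ_nonempty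
      (fun p : X₁ × X₂ => π p * parC C₁ C₂ p q)
    rw [hp₀]
    have h1 : π p₀ * parC C₁ C₂ p₀ q * m
        ≤ (marg1 π p₀.1 * C₁ p₀.1 q.1) * (marg2 π p₀.2 * C₂ p₀.2 q.2) := by
      have hCnn : 0 ≤ C₁ p₀.1 q.1 * C₂ p₀.2 q.2 := mul_nonneg (hC₁0 _ _) (hC₂0 _ _)
      calc π p₀ * parC C₁ C₂ p₀ q * m
          = (π p₀ * m) * (C₁ p₀.1 q.1 * C₂ p₀.2 q.2) := by rw [parC]; ring
        _ ≤ (marg1 π p₀.1 * marg2 π p₀.2) * (C₁ p₀.1 q.1 * C₂ p₀.2 q.2) :=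
            mul_le_mul_of_nonneg_right (key p₀) hCnn
        _ = (marg1 π p₀.1 * C₁ p₀.1 q.1) * (marg2 π p₀.2 * C₂ p₀.2 q.2) := by ring
    refine h1.trans ?_
    have ha := Finset.le_sup' (fun x₁ => marg1 π x₁ * C₁ x₁ q.1) (Finset.mem_univ p₀.1)
    have hb := Finset.le_sup' (fun x₂ => marg2 π x₂ * C₂ x₂ q.2) (Finset.mem_univ p₀.2)
    exact mul_le_mul ha hb (mul_nonneg (hmarg2 _) (hC₂0 _ _)) (hsup1 q.1)
  calc ∑ q : Y₁ × Y₂,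
        (Finset.univ.sup' Finset.univ_nonempty fun p : X₁ × X₂ => π p * parC C₁ C₂ p q) * m
      ≤ ∑ q : Y₁ × Y₂,
        (Finset.univ.sup' Finset.univ_nonempty fun x₁ => marg1 π x₁ * C₁ x₁ q.1) *
          (Finset.univ.sup' Finset.univ_nonempty fun x₂ => marg2 π x₂ * C₂ x₂ q.2) :=
        Finset.sum_le_sum fun q _ => step q
    _ = Vpost (marg1 π) C₁ * Vpost (marg2 π) C₂ := by
        rw [Vpost, Vpost, Finset.sum_mul_sum, Fintype.sum_prod_type]

end QIF10
end
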